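/- arXiv:1906.03570 — 5 statements merged into one kernel-verified Lean document; each statement's English description precedes it below -/
import Mathlib

section
/- Let G be a finite group, let p be a prime, and let u = ∑_{x∈G} u_x x be a normalized unit of finite order n in the integral group ring ℤG (i.e., ∑ u_x = 1 and u is invertible with uⁿ = 1). If u ≠ 1, then the coefficient of the identity element of G in u is 0. -/
/-!
Map `u` to `v ∈ ℂG` and let `v` act on `ℂG` by left multiplication. This operator has finite
order, so it is semisimple with roots of unity as eigenvalues, and its trace is `|G| • u₁`.
Hence `|u₁| ≤ 1`, and if `u₁ = ±1` then `u₁ v` has trace `|G|`, which forces all its eigenvalues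
to be `1`, so `u₁ v = 1` and `u = u₁ • 1`; the augmentation then gives `u = 1`.
-/

open Polynomial Module MonoidAlgebra

lemma Complex.eq_one_of_norm_le_one_of_re_eq_one {z : ℂ} (hz : ‖z‖ ≤ 1) (hre : z.re = 1) :
    z = 1 := by
  have him : z.im ^ 2 ≤ 0 := by
    nlinarith [Complex.sq_norm_sub_sq_re z, norm_nonneg z]
  exact Complex.ext hre (by simpa using him)

lemma Multiset.eq_one_of_norm_le_one_of_sum_eq_card {s : Multiset ℂ} (hs : ∀ z ∈ s, ‖z‖ ≤ 1)
    (hsum : s.sum = Multiset.card s) : ∀ z ∈ s, z = 1 := by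
  by_contra! ⟨z, hz, hz1⟩
  have hre_le (w : ℂ) (hw : w ∈ s) : w.re ≤ 1 := (Complex.re_le_norm w).trans (hs w hw)
  have hre_lt : (s.map Complex.re).sum < (s.map fun _ => (1 : ℝ)).sum :=
    Multiset.sum_lt_sum hre_le ⟨z, hz, (hre_le z hz).lt_of_ne
      fun h => hz1 (Complex.eq_one_of_norm_le_one_of_re_eq_one (hs z hz) h)⟩
  have hre_sum : (s.map Complex.re).sum = Multiset.card s := by
    simpa [hsum] using (map_multiset_sum Complex.reAddGroupHom s).symm
  simp [hre_sum] at hre_lt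

namespace Module.End

variable {V : Type*} [AddCommGroup V] [Module ℂ V] [FiniteDimensional ℂ V] {f : End ℂ V} {n : ℕ}

lemma norm_eq_one_of_mem_roots_charpoly (hn : n ≠ 0) (hf : f ^ n = 1) {z : ℂ}
    (hz : z ∈ f.charpoly.roots) : ‖z‖ = 1 := by
  obtain ⟨v, hv⟩ := ((hasEigenvalue_iff_isRoot_charpoly f z).mpr
    (isRoot_of_mem_roots hz)).exists_hasEigenvector
  have hzv : z ^ n • v = (1 : ℂ) • v := by simpa [hf] using (hv.pow_apply n).symm
  exact Complex.norm_eq_one_of_pow_eq_one (smul_left_injective ℂ hv.2 hzv) hn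

lemma card_roots_charpoly (f : End ℂ V) :
    Multiset.card f.charpoly.roots = finrank ℂ V := by
  rw [splits_iff_card_roots.mp (IsAlgClosed.splits _), LinearMap.charpoly_natDegree]

lemma norm_trace_le_finrank (hn : n ≠ 0) (hf : f ^ n = 1) :
    ‖LinearMap.trace ℂ V f‖ ≤ finrank ℂ V := by
  rw [trace_eq_sum_roots_charpoly_of_splits (IsAlgClosed.splits _), ← card_roots_charpoly f]
  calc ‖f.charpoly.roots.sum‖ ≤ (f.charpoly.roots.map norm).sum := norm_multiset_sum_le _
    _ = Multiset.card f.charpoly.roots := by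
      rw [Multiset.map_congr rfl fun z hz => norm_eq_one_of_mem_roots_charpoly hn hf hz]
      simp

lemma eq_one_of_pow_eq_one_of_trace_eq_finrank (hn : n ≠ 0) (hf : f ^ n = 1)
    (htr : LinearMap.trace ℂ V f = finrank ℂ V) : f = 1 := by
  have hroots : f.charpoly.roots = Multiset.replicate (finrank ℂ V) 1 := by
    refine Multiset.eq_replicate.mpr ⟨card_roots_charpoly f, ?_⟩
    refine Multiset.eq_one_of_norm_le_one_of_sum_eq_card
      (fun z hz => (norm_eq_one_of_mem_roots_charpoly hn hf hz).le) ?_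
    rw [← trace_eq_sum_roots_charpoly_of_splits (IsAlgClosed.splits _), htr,
      card_roots_charpoly f]
  have hnil : IsNilpotent (f - 1) := by
    refine ⟨finrank ℂ V, ?_⟩
    have := LinearMap.aeval_self_charpoly f
    rw [(IsAlgClosed.splits _).eq_prod_roots_of_monic (LinearMap.charpoly_monic f), hroots] at this
    simpa using this
  have hss : (f - 1).IsSemisimple := by
    have hf_ss : f.IsSemisimple :=
      isSemisimple_of_squarefree_aeval_eq_zero
        (separable_X_pow_sub_C (1 : ℂ) (by exact_mod_cast hn) one_ne_zero).squarefree
        (by simp [hf])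
    simpa using (isSemisimple_sub_algebraMap_iff (μ := (1 : ℂ))).mpr hf_ss
  exact sub_eq_zero.mp (eq_zero_of_isNilpotent_isSemisimple hnil hss)

end Module.End

lemma LinearMap.mulLeft_pow_eq_one {R A : Type*} [CommSemiring R] [Semiring A] [Algebra R A]
    {a : A} {n : ℕ} (ha : a ^ n = 1) : mulLeft R a ^ n = 1 := by
  rw [pow_mulLeft, ha, mulLeft_one, Module.End.one_eq_id]

namespace MonoidAlgebra

lemma trace_mulLeft {k G : Type*} [CommRing k] [Group G] [Fintype G] (v : k[G]) :
    LinearMap.trace k k[G] (LinearMap.mulLeft k v) = Fintype.card G • v.coeff 1 := by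
  classical
  rw [LinearMap.trace_eq_matrix_trace k (basis G k), Matrix.trace]
  have hdiag (x : G) : LinearMap.toMatrix (basis G k) (basis G k) (LinearMap.mulLeft k v) x x =
      v.coeff 1 := by
    rw [LinearMap.toMatrix_apply, basis_apply, LinearMap.mulLeft_apply]
    change (v * single x 1).coeff x = _
    rw [coeff_mul_single_apply, mul_inv_cancel, mul_one]
  simp only [Matrix.diag_apply, hdiag, Finset.sum_const, Finset.card_univ]

variable {G : Type*} [Group G] [Fintype G] {n : ℕ}

lemma norm_coeff_one_le_one_of_pow_eq_one {w : ℂ[G]} (hn : n ≠ 0) (hw : w ^ n = 1) :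
    ‖w.coeff 1‖ ≤ 1 := by
  have h := Module.End.norm_trace_le_finrank hn (LinearMap.mulLeft_pow_eq_one hw)
  rw [trace_mulLeft, finrank_eq_card_basis (basis G ℂ), nsmul_eq_mul, norm_mul,
    Complex.norm_natCast] at h
  have hG : (0 : ℝ) < Fintype.card G := by exact_mod_cast Fintype.card_pos
  exact le_of_mul_le_mul_left (by simpa using h) hG

lemma eq_one_of_pow_eq_one_of_coeff_one_eq_one {w : ℂ[G]} (hn : n ≠ 0) (hw : w ^ n = 1)
    (h1 : w.coeff 1 = 1) : w = 1 := by
  have h := Module.End.eq_one_of_pow_eq_one_of_trace_eq_finrank hn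
    (LinearMap.mulLeft_pow_eq_one hw)
    (by rw [trace_mulLeft, finrank_eq_card_basis (basis G ℂ), h1, nsmul_eq_mul, mul_one])
  simpa using LinearMap.congr_fun h 1

lemma eq_single_one_of_pow_eq_one {u : ℤ[G]} (hn : n ≠ 0) (hu : u ^ n = 1)
    (h1 : u.coeff 1 ≠ 0) : u = single 1 (u.coeff 1) := by
  set t := u.coeff 1
  let v : ℂ[G] := mapRingHom G (Int.castRingHom ℂ) u
  have hv : v ^ n = 1 := by rw [← map_pow, hu, map_one]
  have hv1 : v.coeff 1 = t := by simp [v, t]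
  have ht : t * t = 1 := by
    have := norm_coeff_one_le_one_of_pow_eq_one hn hv
    rw [hv1, Complex.norm_intCast] at this
    obtain ⟨ht_ge, ht_le⟩ := abs_le.mp (show |t| ≤ 1 by exact_mod_cast this)
    rcases (by omega : t = 1 ∨ t = -1) with h | h <;> simp [h]
  have htv : (t : ℂ) • v = 1 := by
    refine eq_one_of_pow_eq_one_of_coeff_one_eq_one (mul_ne_zero two_ne_zero hn) ?_ ?_
    · have ht2 : (t : ℂ) ^ 2 = 1 := by rw [sq]; exact_mod_cast ht
      rw [_root_.smul_pow, pow_mul, ht2, one_pow, one_smul, pow_mul', hv, one_pow]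
    · rw [coeff_smul_apply, hv1, smul_eq_mul]; exact_mod_cast ht
  have hv_single : v = single 1 (t : ℂ) := by
    calc v = ((t * t : ℤ) : ℂ) • v := by rw [ht, Int.cast_one, one_smul]
      _ = (t : ℂ) • 1 := by rw [Int.cast_mul, mul_smul, htv]
      _ = single 1 (t : ℂ) := by rw [one_def, smul_single, smul_eq_mul, mul_one]
  refine map_injective (Int.castRingHom ℂ).toAddMonoidHom Int.cast_injective ?_
  rw [map_single]
  exact hv_single

end MonoidAlgebra

/-- Berman–Higman theorem: a nontrivial normalized torsion unit in the integral
group ring of a finite group has coefficient `0` at the identity element. -/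
theorem berman_higman {G : Type*} [Group G] [Fintype G]
    (u : MonoidAlgebra ℤ G) (n : ℕ) (hn : 0 < n) (hun : u ^ n = 1)
    (haug : (u.coeff.sum fun _ c => c) = 1) (hne : u ≠ 1) :
    u.coeff 1 = 0 := by
  by_contra h1
  have hu := eq_single_one_of_pow_eq_one hn.ne' hun h1
  rw [hu, coeff_single, Finsupp.sum_single_index rfl] at haug
  exact hne (by rw [hu, haug, one_def])
end

section
/- Let T be a semistandard skew tableau (entries weakly increase along rows, strictly increase down columns) satisfying the lattice property. Let b be a box of T with entry e such that there are ℓ boxes strictly to the right of b in the same row. Then the reverse reading word w(b) (reading entries right-to-left, top-to-bottom, ending at b) contains the letter e at least ℓ + 1 times. -/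
/-- A semistandard skew tableau: a finite set of boxes `cells ⊆ ℕ × ℕ`
(row index, column index, both 0-indexed) forming a skew shape, together with
positive integer entries that weakly increase along rows and strictly
increase down columns. -/
structure SkewTableau where
  cells : Finset (ℕ × ℕ)
  entry : ℕ × ℕ → ℕ
  pos : ∀ b ∈ cells, 1 ≤ entry b
  rowConvex : ∀ i j k l : ℕ, (i, j) ∈ cells → (i, l) ∈ cells → j ≤ k → k ≤ l →
    (i, k) ∈ cells
  colConvex : ∀ i k l j : ℕ, (i, j) ∈ cells → (l, j) ∈ cells → i ≤ k → k ≤ l →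
    (k, j) ∈ cells
  skew : ∀ i i' j j' : ℕ, (i, j) ∈ cells → (i', j') ∈ cells → i ≤ i' → j' ≤ j →
    (i, j') ∈ cells
  rowWeak : ∀ i j : ℕ, (i, j) ∈ cells → (i, j + 1) ∈ cells →
    entry (i, j) ≤ entry (i, j + 1)
  colStrict : ∀ i j : ℕ, (i, j) ∈ cells → (i + 1, j) ∈ cells →
    entry (i, j) < entry (i + 1, j)

namespace SkewTableau

/-- The number of occurrences of the letter `e` in the reverse reading word `w(b)`
of `T` up to (and including) the box `b`: boxes are read right to left along rows,
top to bottom, so the word up to `b` consists of the boxes in rows strictly above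
`b` together with the boxes in the row of `b` weakly to its right. -/
def wcount (T : SkewTableau) (b : ℕ × ℕ) (e : ℕ) : ℕ :=
  (T.cells.filter fun c => (c.1 < b.1 ∨ (c.1 = b.1 ∧ b.2 ≤ c.2)) ∧ T.entry c = e).card

/-- The lattice property: in every prefix `w(b)` of the reverse reading word, each
letter `e` occurs at least as often as the letter `e + 1`. -/
def lattice (T : SkewTableau) : Prop :=
  ∀ b ∈ T.cells, ∀ e : ℕ, T.wcount b (e + 2) ≤ T.wcount b (e + 1)

/-- The total number of occurrences of the letter `e` in `T` (the `e`-th part of the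
content of `T`). -/
def totalCount (T : SkewTableau) (e : ℕ) : ℕ :=
  (T.cells.filter fun c => T.entry c = e).card

/-- `γ_s(T)`: the number of letters occurring at least `s` times in `T`,
i.e. the number of parts of the content of `T` that are at least `s`. -/
def gamma (T : SkewTableau) (s : ℕ) : ℕ :=
  ((T.cells.image T.entry).filter fun e => s ≤ T.totalCount e).card

end SkewTableau


lemma SkewTableau.wcount_antitone (T : SkewTableau) (hT : T.lattice) (b : ℕ × ℕ)
    (hb : b ∈ T.cells) (e₁ e₂ : ℕ) (h1 : 1 ≤ e₁) (h12 : e₁ ≤ e₂) :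
    T.wcount b e₂ ≤ T.wcount b e₁ := by
  induction e₂, h12 using Nat.le_induction with
  | base => exact le_refl _
  | succ n hn ih =>
    refine le_trans ?_ ih
    obtain ⟨f, rfl⟩ : ∃ f, n = f + 1 := ⟨n - 1, by omega⟩
    exact hT b hb f

lemma SkewTableau.wcount_pos_self (T : SkewTableau) (b : ℕ × ℕ) (hb : b ∈ T.cells) :
    1 ≤ T.wcount b (T.entry b) := by
  have : b ∈ T.cells.filter fun c => (c.1 < b.1 ∨ (c.1 = b.1 ∧ b.2 ≤ c.2)) ∧
      T.entry c = T.entry b := by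
    simp [Finset.mem_filter, hb]
  exact Finset.card_pos.mpr ⟨b, this⟩

lemma SkewTableau.wcount_step (T : SkewTableau) (i k : ℕ) (h : (i, k) ∈ T.cells) :
    T.wcount (i, k + 1) (T.entry (i, k)) + 1 ≤ T.wcount (i, k) (T.entry (i, k)) := by
  have hss : (T.cells.filter fun c => (c.1 < i ∨ (c.1 = i ∧ k + 1 ≤ c.2)) ∧
      T.entry c = T.entry (i, k)) ⊂
      (T.cells.filter fun c => (c.1 < i ∨ (c.1 = i ∧ k ≤ c.2)) ∧
      T.entry c = T.entry (i, k)) := by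
    constructor
    · intro c hc
      simp only [Finset.mem_filter] at *
      refine ⟨hc.1, ?_, hc.2.2⟩
      rcases hc.2.1 with h1 | h1
      · exact Or.inl h1
      · exact Or.inr ⟨h1.1, by omega⟩
    · intro hsub
      have hmem : (i, k) ∈ T.cells.filter fun c => (c.1 < i ∨ (c.1 = i ∧ k ≤ c.2)) ∧
          T.entry c = T.entry (i, k) := by
        simp [Finset.mem_filter, h]
      have := hsub hmem
      simp only [Finset.mem_filter] at this
      omega
  have := Finset.card_lt_card hss
  simpa [SkewTableau.wcount] using this

/-- Lemma 3.3 generalization: if `b = (i, j)` is a box of a lattice semistandard skew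
tableau `T` with entry `e`, and the `ℓ` boxes strictly to the right of `b` in its row
are all present, then the word `w(b)` contains the letter `e` at least `ℓ + 1` times. -/
theorem SkewTableau.wcount_entry_ge (T : SkewTableau) (hT : T.lattice)
    (i j ℓ : ℕ) (hb : (i, j) ∈ T.cells)
    (hright : ∀ m : ℕ, 1 ≤ m → m ≤ ℓ → (i, j + m) ∈ T.cells) :
    ℓ + 1 ≤ T.wcount (i, j) (T.entry (i, j)) := by
  suffices h : ∀ d, d ≤ ℓ → d + 1 ≤ T.wcount (i, j + (ℓ - d)) (T.entry (i, j + (ℓ - d))) by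
    have := h ℓ le_rfl
    simpa using this
  intro d
  induction d with
  | zero =>
    intro _
    have hmem : (i, j + (ℓ - 0)) ∈ T.cells := by
      rcases Nat.eq_zero_or_pos ℓ with h | h
      · simpa [h] using hb
      · exact hright (ℓ - 0) (by omega) (by omega)
    exact T.wcount_pos_self _ hmem
  | succ d ih =>
    intro hd
    set m := ℓ - (d + 1) with hm
    have hm1 : ℓ - d = m + 1 := by omega
    have hc0 : (i, j + m) ∈ T.cells := by
      rcases Nat.eq_zero_or_pos m with h | h
      · rw [h]; simpa using hb
      · exact hright m (by omega) (by omega)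
    have hc1 : (i, j + m + 1) ∈ T.cells := by
      have := hright (m + 1) (by omega) (by omega)
      simpa [← Nat.add_assoc] using this
    have hww : T.entry (i, j + m) ≤ T.entry (i, j + m + 1) := T.rowWeak i (j + m) hc0 hc1
    have hpos : 1 ≤ T.entry (i, j + m) := T.pos _ hc0
    have ih' : d + 1 ≤ T.wcount (i, j + m + 1) (T.entry (i, j + m + 1)) := by
      have := ih (by omega)
      rw [hm1] at this
      simpa [← Nat.add_assoc] using this
    have h1 := T.wcount_antitone hT _ hc1 _ _ hpos hww
    have h2 := T.wcount_step i (j + m) hc0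
    omega
end

section
/- Let T be a semistandard skew tableau satisfying the lattice property, with content ν = (ν₁, ν₂, …). If T contains a full rectangle of boxes of height h and width k (an h × k block of boxes all present in T), then at least h of the parts ν_i satisfy ν_i ≥ k. -/
namespace SkewTableau

lemma wcount_le_totalCount (T : SkewTableau) (b : ℕ × ℕ) (e : ℕ) :
    T.wcount b e ≤ T.totalCount e := by
  apply Finset.card_le_card
  intro x hx
  simp only [wcount, totalCount, Finset.mem_filter] at *
  tauto

lemma wcount_anti (T : SkewTableau) (hT : T.lattice) (b : ℕ × ℕ) (hb : b ∈ T.cells)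
    {e f : ℕ} (he : 1 ≤ e) (hef : e ≤ f) : T.wcount b f ≤ T.wcount b e := by
  induction f, hef using Nat.le_induction with
  | base => exact le_rfl
  | succ f hf ih =>
    refine le_trans ?_ ih
    obtain ⟨g, hg⟩ := Nat.exists_eq_add_of_le (le_trans he hf)
    have h1 : T.wcount b (g + 2) ≤ T.wcount b (g + 1) := hT b hb g
    have e1 : f + 1 = g + 2 := by omega
    have e2 : f = g + 1 := by omega
    rw [e1, e2]
    exact h1

lemma wcount_step_s10 (T : SkewTableau) {i j : ℕ} (hb : (i, j) ∈ T.cells) (e : ℕ)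
    (he : T.entry (i, j) = e) :
    T.wcount (i, j + 1) e + 1 ≤ T.wcount (i, j) e := by
  have hsub : T.cells.filter
      (fun x => (x.1 < (i, j + 1).1 ∨ (x.1 = (i, j + 1).1 ∧ (i, j + 1).2 ≤ x.2)) ∧ T.entry x = e)
      ⊆ T.cells.filter
      (fun x => (x.1 < (i, j).1 ∨ (x.1 = (i, j).1 ∧ (i, j).2 ≤ x.2)) ∧ T.entry x = e) := by
    intro x hx
    simp only [Finset.mem_filter] at *
    refine ⟨hx.1, ?_, hx.2.2⟩
    rcases hx.2.1 with h' | h'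
    · exact Or.inl h'
    · exact Or.inr ⟨h'.1, by omega⟩
  have hss : T.cells.filter
      (fun x => (x.1 < (i, j + 1).1 ∨ (x.1 = (i, j + 1).1 ∧ (i, j + 1).2 ≤ x.2)) ∧ T.entry x = e)
      ⊂ T.cells.filter
      (fun x => (x.1 < (i, j).1 ∨ (x.1 = (i, j).1 ∧ (i, j).2 ≤ x.2)) ∧ T.entry x = e) := by
    rw [Finset.ssubset_iff_of_subset hsub]
    refine ⟨(i, j), ?_, ?_⟩
    · simp [hb, he]
    · simp only [Finset.mem_filter]
      intro hmem
      rcases hmem.2.1 with h' | h' <;> omega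
  have := Finset.card_lt_card hss
  simpa [wcount] using this

lemma wcount_self_pos (T : SkewTableau) {b : ℕ × ℕ} (hb : b ∈ T.cells) :
    1 ≤ T.wcount b (T.entry b) := by
  rw [wcount, Nat.one_le_iff_ne_zero, ← Nat.pos_iff_ne_zero, Finset.card_pos]
  exact ⟨b, by simp [hb]⟩

lemma entry_col_ge (T : SkewTableau) {r c h : ℕ}
    (hrect : ∀ a, a < h → (r + a, c) ∈ T.cells) :
    ∀ a, a < h → a + 1 ≤ T.entry (r + a, c) := by
  intro a
  induction a with
  | zero => intro ha; exact T.pos _ (hrect 0 ha)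
  | succ a ih =>
    intro ha
    have h1 := ih (by omega)
    have h2 : T.entry (r + a, c) < T.entry (r + (a + 1), c) :=
      T.colStrict (r + a) c (hrect a (by omega)) (hrect (a + 1) ha)
    omega

end SkewTableau

/-- If a lattice semistandard skew tableau `T` contains a full rectangle of boxes of
height `h` and width `k` (with top-left corner `(r, c)`), then at least `h` parts of
the content of `T` are at least `k`, i.e. `γ_k(T) ≥ h`. -/
theorem SkewTableau.gamma_ge_of_rectangle (T : SkewTableau) (hT : T.lattice)
    (h k r c : ℕ) (hk : 0 < k)
    (hrect : ∀ a b : ℕ, a < h → b < k → (r + a, c + b) ∈ T.cells) :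
    h ≤ T.gamma k := by
  rcases Nat.eq_zero_or_pos h with rfl | hh
  · exact Nat.zero_le _
  -- every cell in the bottom row of the rectangle is in T
  have hbot : ∀ t, t < k → (r + (h - 1), c + t) ∈ T.cells := fun t ht =>
    hrect (h - 1) t (by omega) ht
  -- entries in the bottom row are ≥ h
  have hge : ∀ t, t < k → h ≤ T.entry (r + (h - 1), c + t) := by
    intro t ht
    have := T.entry_col_ge (r := r) (c := c + t) (h := h)
      (fun a ha => hrect a t ha ht) (h - 1) (by omega)
    omega
  -- key induction: going right-to-left along the bottom row
  have key : ∀ s, s < k →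
      s + 1 ≤ T.wcount (r + (h - 1), c + (k - 1 - s))
        (T.entry (r + (h - 1), c + (k - 1 - s))) := by
    intro s
    induction s with
    | zero => intro hs; exact T.wcount_self_pos (hbot (k - 1 - 0) (by omega))
    | succ s ih =>
      intro hs
      have ih' := ih (by omega)
      set t := k - 1 - (s + 1) with ht
      have htk : t < k := by omega
      have hts : k - 1 - s = t + 1 := by omega
      rw [hts] at ih'
      have hcell : (r + (h - 1), c + t) ∈ T.cells := hbot t htk
      have hcell' : (r + (h - 1), c + (t + 1)) ∈ T.cells := hbot (t + 1) (by omega)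
      have hrw : T.entry (r + (h - 1), c + t) ≤ T.entry (r + (h - 1), c + (t + 1)) := by
        have := T.rowWeak (r + (h - 1)) (c + t) hcell (by rw [show c + t + 1 = c + (t + 1) by ring]; exact hcell')
        rwa [show c + t + 1 = c + (t + 1) by ring] at this
    -- wcount at (c+t) for letter entry(c+t) ≥ wcount at (c+t+1) for same letter + 1
      have hstep := T.wcount_step_s10 hcell (T.entry (r + (h - 1), c + t)) rfl
      rw [show c + t + 1 = c + (t + 1) by ring] at hstep
      have hanti : T.wcount (r + (h - 1), c + (t + 1)) (T.entry (r + (h - 1), c + (t + 1)))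
          ≤ T.wcount (r + (h - 1), c + (t + 1)) (T.entry (r + (h - 1), c + t)) :=
        T.wcount_anti hT _ hcell' (T.pos _ hcell) hrw
      omega
  -- at t = 0 : the letter f₀ at the bottom-left corner occurs ≥ k times in its prefix
  have hk0 : k ≤ T.wcount (r + (h - 1), c) (T.entry (r + (h - 1), c)) := by
    have h' := key (k - 1) (by omega)
    rw [show k - 1 - (k - 1) = 0 by omega] at h'
    have h'' : k - 1 + 1 ≤ T.wcount (r + (h - 1), c) (T.entry (r + (h - 1), c)) := h'
    omega
  have hcell0 : (r + (h - 1), c) ∈ T.cells := by simpa using hbot 0 hk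
  -- each letter 1 ≤ e ≤ h occurs at least k times in T
  have hcount : ∀ e, 1 ≤ e → e ≤ h → k ≤ T.totalCount e := by
    intro e he1 heh
    have hf0 : e ≤ T.entry (r + (h - 1), c) := le_trans heh (by simpa using hge 0 hk)
    calc k ≤ T.wcount (r + (h - 1), c) (T.entry (r + (h - 1), c)) := hk0
      _ ≤ T.wcount (r + (h - 1), c) e := T.wcount_anti hT _ hcell0 he1 hf0
      _ ≤ T.totalCount e := T.wcount_le_totalCount _ _
  -- conclude: letters 1..h all lie in the filtered image
  have hsub : Finset.Icc 1 h ⊆ (T.cells.image T.entry).filter fun e => k ≤ T.totalCount e := by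
    intro e he
    rw [Finset.mem_Icc] at he
    have hc := hcount e he.1 he.2
    have hpos : 0 < T.totalCount e := lt_of_lt_of_le hk hc
    rw [totalCount, Finset.card_pos] at hpos
    obtain ⟨x, hx⟩ := hpos
    rw [Finset.mem_filter] at hx
    rw [Finset.mem_filter, Finset.mem_image]
    exact ⟨⟨x, hx.1, hx.2⟩, hc⟩
  have := Finset.card_le_card hsub
  rw [Nat.card_Icc] at this
  rw [gamma]
  omega
end

section
/- Let T be a semistandard skew tableau with ℓ columns satisfying the lattice property, and fix positive integers c, h, k. If all boxes of the first ℓ − k columns of T lie in rows between row c+1 and row c+h (inclusive), then at most h letters occur with multiplicity at least k+1 in T; that is, γ_{k+1}(T) ≤ h. -/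
namespace SkewTableau

lemma rowWeak_chain (T : SkewTableau) : ∀ d i j, (i, j) ∈ T.cells → (i, j + d) ∈ T.cells →
    T.entry (i, j) ≤ T.entry (i, j + d) := by
  intro d
  induction d with
  | zero => intro i j _ _; exact le_refl _
  | succ d ih =>
    intro i j h1 h2
    have hmid : (i, j + d) ∈ T.cells :=
      T.rowConvex i j (j + d) (j + d + 1) h1 h2 (by omega) (by omega)
    exact le_trans (ih i j h1 hmid) (T.rowWeak i (j + d) hmid h2)

lemma colStrict_chain (T : SkewTableau) : ∀ d i j, (i, j) ∈ T.cells → (i + d + 1, j) ∈ T.cells →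
    T.entry (i, j) < T.entry (i + d + 1, j) := by
  intro d
  induction d with
  | zero => intro i j h1 h2; exact T.colStrict i j h1 h2
  | succ d ih =>
    intro i j h1 h2
    have hmid : (i + d + 1, j) ∈ T.cells :=
      T.colConvex i (i + d + 1) (i + d + 2) j h1 h2 (by omega) (by omega)
    exact lt_trans (ih i j h1 hmid) (T.colStrict (i + d + 1) j hmid h2)

lemma entry_le_of_same_row (T : SkewTableau) {i j j' : ℕ} (h1 : (i, j) ∈ T.cells)
    (h2 : (i, j') ∈ T.cells) (h : j ≤ j') : T.entry (i, j) ≤ T.entry (i, j') := by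
  obtain ⟨d, rfl⟩ : ∃ d, j' = j + d := ⟨j' - j, by omega⟩
  exact T.rowWeak_chain d i j h1 h2

lemma entry_lt_of_same_col (T : SkewTableau) {r r' s : ℕ} (h1 : (r, s) ∈ T.cells)
    (h2 : (r', s) ∈ T.cells) (h : r < r') : T.entry (r, s) < T.entry (r', s) := by
  obtain ⟨d, rfl⟩ : ∃ d, r' = r + d + 1 := ⟨r' - r - 1, by omega⟩
  exact T.colStrict_chain d r s h1 h2

lemma exists_above (T : SkewTableau) (hT : T.lattice) {b : ℕ × ℕ} (hb : b ∈ T.cells)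
    {f : ℕ} (hf : 1 ≤ f) (he : T.entry b = f + 1) :
    ∃ b' ∈ T.cells, T.entry b' = f ∧ b'.1 < b.1 := by
  obtain ⟨f', rfl⟩ : ∃ f', f = f' + 1 := ⟨f - 1, by omega⟩
  have h1 : 0 < T.wcount b (f' + 2) := by
    rw [wcount]
    refine Finset.card_pos.mpr ⟨b, ?_⟩
    rw [Finset.mem_filter]
    exact ⟨hb, Or.inr ⟨rfl, le_refl _⟩, he⟩
  have h2 : 0 < T.wcount b (f' + 1) := lt_of_lt_of_le h1 (hT b hb f')
  rw [wcount] at h2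
  obtain ⟨c', hc'⟩ := Finset.card_pos.mp h2
  rw [Finset.mem_filter] at hc'
  obtain ⟨hcell, hpos, hent⟩ := hc'
  refine ⟨c', hcell, hent, ?_⟩
  rcases hpos with hlt | ⟨heq, hle⟩
  · exact hlt
  · exfalso
    have hc1 : (b.1, c'.2) ∈ T.cells := by
      have : c' = (b.1, c'.2) := by rw [← heq]
      rwa [this] at hcell
    have hb1 : (b.1, b.2) ∈ T.cells := by rwa [Prod.mk.eta]
    have := T.entry_le_of_same_row hb1 hc1 hle
    rw [Prod.mk.eta] at this
    have hc2 : T.entry (b.1, c'.2) = f' + 1 := by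
      have : c' = (b.1, c'.2) := by rw [← heq]
      rw [← this]; exact hent
    omega

end SkewTableau


/-- If a lattice semistandard skew tableau `T` has `ℓ` columns (all boxes lie in
columns `0, …, ℓ - 1`) and all boxes of the first `ℓ - k` columns lie in the `h`
consecutive rows `c, c + 1, …, c + h - 1` (0-indexed; rows `c+1, …, c+h` in the
1-indexed convention of the paper), then at most `h` letters occur at least
`k + 1` times in `T`, i.e. `γ_{k+1}(T) ≤ h`. -/
theorem SkewTableau.gamma_le_of_columns_between (T : SkewTableau) (hT : T.lattice)
    (ℓ c h k : ℕ)
    (hcols : ∀ b ∈ T.cells, b.2 < ℓ)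
    (hrows : ∀ b ∈ T.cells, b.2 < ℓ - k → c ≤ b.1 ∧ b.1 < c + h) :
    T.gamma (k + 1) ≤ h := by
  have key : ((T.cells.image T.entry).filter fun e => (k + 1) ≤ T.totalCount e) ⊆
      Finset.Icc 1 h := by
    intro e hmem
    rw [Finset.mem_filter] at hmem
    obtain ⟨him, hcnt⟩ := hmem
    obtain ⟨b0, hb0, hb0e⟩ := Finset.mem_image.mp him
    have he1 : 1 ≤ e := hb0e ▸ T.pos b0 hb0
    rw [totalCount] at hcnt
    set S := T.cells.filter (fun c => T.entry c = e) with hS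
    -- occurrences of e occupy pairwise distinct columns
    have hinj : Set.InjOn (Prod.snd : ℕ × ℕ → ℕ) ↑S := by
      intro x hx y hy hxy
      rw [Finset.mem_coe, hS, Finset.mem_filter] at hx hy
      obtain ⟨hxc, hxe⟩ := hx
      obtain ⟨hyc, hye⟩ := hy
      have hx' : (x.1, x.2) ∈ T.cells := by rwa [Prod.mk.eta]
      have hy' : (y.1, y.2) ∈ T.cells := by rwa [Prod.mk.eta]
      rcases lt_trichotomy x.1 y.1 with hlt | heq | hlt
      · exfalso
        have := T.entry_lt_of_same_col hx' (hxy ▸ hy') hlt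
        rw [Prod.mk.eta] at this
        have : T.entry x < T.entry (y.1, y.2) := by rwa [hxy] at this
        rw [Prod.mk.eta] at this
        omega
      · exact Prod.ext heq hxy
      · exfalso
        have := T.entry_lt_of_same_col hy' (hxy ▸ hx') hlt
        rw [Prod.mk.eta] at this
        have : T.entry y < T.entry (x.1, x.2) := by rwa [← hxy] at this
        rw [Prod.mk.eta] at this
        omega
    have hcardim : (S.image Prod.snd).card = S.card := Finset.card_image_of_injOn hinj
    -- some occurrence of e lies in a column < ℓ - k
    have hwest : ∃ w ∈ S, w.2 < ℓ - k := by
      by_contra hno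
      push_neg at hno
      have hsub : S.image Prod.snd ⊆ Finset.Ico (ℓ - k) ℓ := by
        intro s hs
        obtain ⟨x, hx, rfl⟩ := Finset.mem_image.mp hs
        have hx' := Finset.mem_filter.mp hx
        exact Finset.mem_Ico.mpr ⟨hno x hx, hcols x hx'.1⟩
      have := Finset.card_le_card hsub
      rw [hcardim, Nat.card_Ico] at this
      omega
    obtain ⟨w, hwS, hw⟩ := hwest
    have hwcell : w ∈ T.cells := (Finset.mem_filter.mp hwS).1
    have hwe : T.entry w = e := (Finset.mem_filter.mp hwS).2
    have hwrow := hrows w hwcell hw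
    -- every box of T lies in a row ≥ c
    have hallc : ∀ b ∈ T.cells, c ≤ b.1 := by
      intro b hb
      by_cases hbw : b.2 < ℓ - k
      · exact (hrows b hb hbw).1
      · push_neg at hbw
        rcases le_or_gt b.1 w.1 with hle | hlt
        · have hb' : (b.1, b.2) ∈ T.cells := by rwa [Prod.mk.eta]
          have hw' : (w.1, w.2) ∈ T.cells := by rwa [Prod.mk.eta]
          have hmem : (b.1, w.2) ∈ T.cells := T.skew b.1 w.1 b.2 w.2 hb' hw' hle (by omega)
          exact (hrows _ hmem hw).1
        · omega
    -- descending chain of letters, going up in rows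
    have hchain : ∀ d, d < e → ∃ b ∈ T.cells, T.entry b = e - d ∧ b.1 + d ≤ w.1 := by
      intro d
      induction d with
      | zero => intro _; exact ⟨w, hwcell, by simpa using hwe, by omega⟩
      | succ d ih =>
        intro hd
        obtain ⟨b, hb, hbe, hble⟩ := ih (by omega)
        have hf1 : 1 ≤ e - (d + 1) := by omega
        have hbe' : T.entry b = (e - (d + 1)) + 1 := by omega
        obtain ⟨b', hb', hb'e, hb'lt⟩ := T.exists_above hT hb hf1 hbe'
        exact ⟨b', hb', hb'e, by omega⟩
    obtain ⟨b1, hb1, _, hb1le⟩ := hchain (e - 1) (by omega)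
    have hc1 := hallc b1 hb1
    rw [Finset.mem_Icc]
    exact ⟨he1, by omega⟩
  calc T.gamma (k + 1) ≤ (Finset.Icc 1 h).card := Finset.card_le_card key
    _ = h := by rw [Nat.card_Icc]; omega
end

section
/- Let G be a finite group whose Sylow p-subgroup P is cyclic of order p, let h ∈ G be an element whose order is divisible by p, and write h = h_p · h_{p'} as the product of its commuting p-part and p′-part. Then C_G(h_p) = ⟨h_p⟩ × Q for some p′-subgroup Q of G, and h_{p'} ∈ Q. -/
/-!
The hypotheses force `a` to have order exactly `p`, so `⟨a⟩` is a Sylow `p`-subgroup of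
`C = C_G(a)`, and it is central in `C`. Burnside's transfer theorem then gives a normal
`p`-complement `Q` of `⟨a⟩` in `C`, namely the kernel of the transfer `C → ⟨a⟩`; since the
transfer lands in a `p`-group, it kills every `p'`-element, in particular `b`.
-/

open Subgroup

section

variable {G : Type*} [Group G] {p : ℕ}

theorem MonoidHom.map_eq_one_of_coprime_orderOf {H : Type*} [Group H]
    (hH : IsPGroup p H) (f : G →* H) {g : G} (hg : p.Coprime (orderOf g)) : f g = 1 :=
  orderOf_eq_one_iff.mp ((hH.orderOf_coprime hg (f g)).eq_one_of_dvd (orderOf_map_dvd f g))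

theorem dvd_orderOf_left_of_commute (hp : p.Prime) {a b : G} (hcomm : Commute a b)
    (hb : ¬ p ∣ orderOf b) (hab : p ∣ orderOf (a * b)) : p ∣ orderOf a :=
  ((hp.dvd_mul).mp (hab.trans hcomm.orderOf_mul_dvd_mul_orderOf)).resolve_right hb

theorem IsPGroup.card_dvd_of_card_sylow_eq [Finite G] [Fact p.Prime]
    (hSyl : ∀ P : Sylow p G, Nat.card P = p) {H : Subgroup G} (hH : IsPGroup p H) :
    Nat.card H ∣ p := by
  obtain ⟨P, hHP⟩ := hH.exists_le_sylow
  exact hSyl P ▸ card_dvd_of_le hHP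

theorem Subgroup.IsComplement'.map_subtype {C : Subgroup G} {H K : Subgroup C}
    (hHK : IsComplement' H K) :
    H.map C.subtype ⊔ K.map C.subtype = C ∧ H.map C.subtype ⊓ K.map C.subtype = ⊥ := by
  constructor
  · rw [← map_sup, hHK.sup_eq_top, ← MonoidHom.range_eq_map, range_subtype]
  · rw [← map_inf_eq _ _ _ C.subtype_injective, disjoint_iff.mp hHK.disjoint, map_bot]

theorem Sylow.exists_isComplement'_of_le_center [Finite G] [Fact p.Prime] (P : Sylow p G)
    (hP : (P : Subgroup G) ≤ center G) :
    ∃ K : Subgroup G, IsComplement' K P ∧ ¬ p ∣ Nat.card K ∧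
      ∀ g : G, ¬ p ∣ orderOf g → g ∈ K := by
  have hNC : normalizer (P : Subgroup G) ≤ centralizer (P : Set G) :=
    le_top.trans (centralizer_eq_top_iff_subset.mpr hP).ge
  exact ⟨_, MonoidHom.ker_transferSylow_isComplement' P hNC,
    MonoidHom.not_dvd_card_ker_transferSylow P hNC,
    fun g hg => (MonoidHom.transferSylow P hNC).map_eq_one_of_coprime_orderOf P.2
      ((Nat.Prime.coprime_iff_not_dvd Fact.out).mpr hg)⟩

end

/-- If the Sylow `p`-subgroups of a finite group `G` are of order `p`, `h ∈ G` has
order divisible by `p`, and `h = a * b` is the decomposition of `h` into its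
commuting `p`-part `a` and `p'`-part `b`, then the centralizer of `a` decomposes as
the internal direct product `⟨a⟩ × Q` for a `p'`-subgroup `Q` of `G` containing `b`. -/
theorem centralizer_p_part_decomposition {G : Type*} [Group G] [Fintype G]
    {p : ℕ} (hp : p.Prime)
    (hSyl : ∀ P : Sylow p G, Nat.card P = p)
    (h a b : G) (hcomm : a * b = b * a) (hab : h = a * b)
    (ha : ∃ n : ℕ, orderOf a = p ^ n) (hb : ¬ p ∣ orderOf b)
    (hph : p ∣ orderOf h) :
    ∃ Q : Subgroup G,
      ¬ p ∣ Nat.card Q ∧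
      b ∈ Q ∧
      Q ≤ Subgroup.centralizer {a} ∧
      Subgroup.zpowers a ⊔ Q = Subgroup.centralizer {a} ∧
      Subgroup.zpowers a ⊓ Q = ⊥ := by
  have : Fact p.Prime := ⟨hp⟩
  obtain ⟨n, han⟩ := ha
  have hoa : orderOf a = p := by
    refine Nat.dvd_antisymm ?_ (dvd_orderOf_left_of_commute hp hcomm hb (hab ▸ hph))
    rw [← Nat.card_zpowers]
    exact IsPGroup.card_dvd_of_card_sylow_eq hSyl (.of_card (han ▸ Nat.card_zpowers a))
  set C := centralizer ({a} : Set G)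
  let a' : C := ⟨a, mem_centralizer_singleton_iff.mpr rfl⟩
  have ha'_center : a' ∈ center C :=
    mem_center_iff.mpr fun x => Subtype.ext (mem_centralizer_singleton_iff.mp x.2)
  have hoa' : orderOf a' = p := (orderOf_mk a _).trans hoa
  obtain ⟨P, hle⟩ :=
    (IsPGroup.of_card (n := 1) (by rw [Nat.card_zpowers, hoa', pow_one]) :
      IsPGroup p (zpowers a')).exists_le_sylow
  have hP : (P : Subgroup C) = zpowers a' := by
    refine (eq_of_le_of_card_ge hle ?_).symm
    rw [← card_map_of_injective C.subtype_injective, Nat.card_zpowers, hoa']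
    exact Nat.le_of_dvd hp.pos (IsPGroup.card_dvd_of_card_sylow_eq hSyl (P.2.map _))
  obtain ⟨K, hKP, hK, hK_coprime⟩ :=
    P.exists_isComplement'_of_le_center (hP ▸ zpowers_le.mpr ha'_center)
  have hsplit := hKP.map_subtype
  rw [hP, MonoidHom.map_zpowers, sup_comm, inf_comm] at hsplit
  refine ⟨K.map C.subtype, ?_, ⟨⟨b, ?_⟩, hK_coprime _ ?_, rfl⟩, map_subtype_le K, hsplit⟩
  · rwa [card_map_of_injective C.subtype_injective]
  · exact mem_centralizer_singleton_iff.mpr hcomm.symm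
  · rwa [orderOf_mk]
end
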